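/- For probability densities p and q on a finite set S, the quantity D(p,q) = 1/2 − ∑_{s∈S} p(s)q(s)/(p(s)+q(s)) (with the convention that terms with p(s)+q(s)=0 contribute 0) is nonnegative, and equals 0 if and only if p = q. -/

import Mathlib

/-!
Since `∑ s, (p s + q s) / 4 = 1 / 2`, the quantity is `∑ s, ((p s + q s) / 4 - p s q s / (p s + q s))`,
and each summand equals `(p s - q s)² / (4 (p s + q s))`: a nonnegative term that vanishes exactly
when `p s = q s`.
-/

open Finset

/-- Also valid when `a + b = 0`, where both sides are `0` by the convention `x / 0 = 0`. -/
lemma add_div_four_sub_mul_div_add (a b : ℝ) :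
    (a + b) / 4 - a * b / (a + b) = (a - b) ^ 2 / (4 * (a + b)) := by
  by_cases h : a + b = 0
  · simp [h]
  · field_simp
    ring

lemma sq_sub_div_four_mul_add_eq_zero_iff {a b : ℝ} (ha : 0 ≤ a) (hb : 0 ≤ b) :
    (a - b) ^ 2 / (4 * (a + b)) = 0 ↔ a = b := by
  rcases (add_nonneg ha hb).eq_or_lt with h | h
  · obtain rfl : a = 0 := by linarith
    obtain rfl : b = 0 := by linarith
    simp
  · rw [div_eq_zero_iff, or_iff_left (by positivity), pow_eq_zero_iff two_ne_zero, sub_eq_zero]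

theorem stmt_3 {S : Type*} [Fintype S] (p q : S → ℝ)
    (hp : ∀ s, 0 ≤ p s) (hq : ∀ s, 0 ≤ q s)
    (hps : ∑ s, p s = 1) (hqs : ∑ s, q s = 1) :
    0 ≤ 1 / 2 - ∑ s, p s * q s / (p s + q s) ∧
      (1 / 2 - ∑ s, p s * q s / (p s + q s) = 0 ↔ p = q) := by
  have hD : 1 / 2 - ∑ s, p s * q s / (p s + q s) =
      ∑ s, (p s - q s) ^ 2 / (4 * (p s + q s)) := by
    simp only [← add_div_four_sub_mul_div_add, sum_sub_distrib, ← sum_div, sum_add_distrib,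
      hps, hqs]
    norm_num
  have hnonneg : ∀ s ∈ univ, 0 ≤ (p s - q s) ^ 2 / (4 * (p s + q s)) := fun s _ => by
    have := hp s; have := hq s; positivity
  rw [hD, sum_eq_zero_iff_of_nonneg hnonneg, funext_iff]
  exact ⟨sum_nonneg hnonneg, by
    simp only [mem_univ, true_imp_iff, sq_sub_div_four_mul_add_eq_zero_iff (hp _) (hq _)]⟩
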